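/- arXiv:1704.06453 — 4 statements merged into one kernel-verified Lean document; each statement's English description precedes it below -/
import Mathlib

section
/- Fix an integer r ≥ 1 and an odd prime p dividing r, with p^β exactly dividing r² and β = 2β′. Then the Euler factor ∑_{α≥0} ρ_{r²}(p^α)/p^α evaluated at s = 1 equals (1 + p⁻¹)/(1 − p⁻¹). -/
/-- `rho k d` counts residues `0 ≤ x < d` with `x² ≡ k (mod d)`. -/
def rho (k d : ℕ) : ℕ :=
  ((Finset.range d).filter (fun x => x ^ 2 % d = k % d)).card

/-!
Write `r = p^v m` with `p ∤ m`. Every root of `x² ≡ p²k (mod p^(α+2))` is `x = p y` with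
`y² ≡ k (mod p^α)`, and `y` is only determined modulo `p^(α+1)`, so
`ρ_{p²k}(p^(α+2)) = p ρ_k(p^α)`; with `ρ_{p²k}(1) = ρ_{p²k}(p) = 1` the Euler factor satisfies
`E(p²k) = 1 + p⁻¹ + p⁻¹ E(k)`. For `p` odd and `p ∤ m` the congruence `x² ≡ m² (mod p^α)` forces
`x ≡ ±m`, so `E(m²) = 1 + 2 ∑_{α ≥ 1} p^(-α) = (1 + p⁻¹)/(1 - p⁻¹)`, which is the fixed point
of the recursion.
-/

open Finset

lemma card_filter_range_mul_of_periodic {P : ℕ → Prop} [DecidablePred P] {n : ℕ}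
    (hP : Function.Periodic P n) (m : ℕ) :
    #{x ∈ range (n * m) | P x} = m * #{x ∈ range n | P x} := by
  simp only [← Nat.count_eq_card_filter_range]
  induction m with
  | zero => simp
  | succ m ih =>
    have hshift : (fun k ↦ P (n * m + k)) = P := by
      funext k
      rw [add_comm, mul_comm]
      exact hP.nat_mul m k
    simp only [Nat.mul_succ, Nat.count_add, ih, hshift, Nat.succ_mul]

lemma Int.not_dvd_two_mul_of_odd_prime {p : ℕ} (hp : p.Prime) (hodd : Odd p) {m : ℤ}
    (hm : ¬ (p : ℤ) ∣ m) : ¬ (p : ℤ) ∣ 2 * m := by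
  intro h
  rcases Int.Prime.dvd_mul' hp h with h2 | h2
  · have : p = 2 := (Nat.prime_dvd_prime_iff_eq hp Nat.prime_two).1 (by exact_mod_cast h2)
    subst this
    exact absurd hodd (by decide)
  · exact hm h2

lemma Int.pow_dvd_sub_or_add_of_pow_dvd_mul {p : ℕ} (hp : p.Prime) (hodd : Odd p) {a m : ℤ}
    (hm : ¬ (p : ℤ) ∣ m) {α : ℕ} (h : (p : ℤ) ^ α ∣ (a - m) * (a + m)) :
    (p : ℤ) ^ α ∣ a - m ∨ (p : ℤ) ^ α ∣ a + m := by
  have hp' : Prime (p : ℤ) := Nat.prime_iff_prime_int.1 hp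
  by_cases hadd : (p : ℤ) ∣ a + m
  · refine .inr (hp'.pow_dvd_of_dvd_mul_left α (fun hsub ↦ ?_) h)
    refine Int.not_dvd_two_mul_of_odd_prime hp hodd hm ?_
    rw [show 2 * m = a + m - (a - m) by ring]
    exact dvd_sub hadd hsub
  · exact .inl (hp'.pow_dvd_of_dvd_mul_right α hadd h)

lemma rho_eq_card_modEq (k d : ℕ) : rho k d = #{x ∈ range d | x ^ 2 ≡ k [MOD d]} := rfl

lemma rho_one (k : ℕ) : rho k 1 = 1 := by
  simp [rho, Nat.mod_one]

lemma rho_eq_card_zmod (k d : ℕ) [NeZero d] : rho k d = #{x : ZMod d | x ^ 2 = k} := by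
  refine card_bij' (fun x _ ↦ x) (fun x _ ↦ x.val) (fun x hx ↦ ?_) (fun x hx ↦ ?_)
    (fun x hx ↦ ?_) (fun x _ ↦ ZMod.natCast_zmod_val x)
  · simp only [mem_filter, mem_range, mem_univ, true_and] at hx ⊢
    exact_mod_cast (ZMod.natCast_eq_natCast_iff' _ _ _).2 hx.2
  · simp only [mem_filter, mem_range, mem_univ, true_and] at hx ⊢
    refine ⟨ZMod.val_lt x, (ZMod.natCast_eq_natCast_iff' _ _ _).1 ?_⟩
    push_cast
    rwa [ZMod.natCast_zmod_val]
  · simp only [mem_filter, mem_range] at hx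
    rw [ZMod.val_natCast, Nat.mod_eq_of_lt hx.1]

lemma rho_prime_sq_mul_prime {p : ℕ} (hp : p.Prime) (k : ℕ) : rho (p ^ 2 * k) p = 1 := by
  have := Fact.mk hp
  rw [rho_eq_card_zmod]
  simp [filter_eq']

lemma rho_prime_sq_mul_pow_add_two {p : ℕ} (hp : p.Prime) (k α : ℕ) :
    rho (p ^ 2 * k) (p ^ (α + 2)) = p * rho k (p ^ α) := by
  have hroots : {x ∈ range (p ^ (α + 2)) | x ^ 2 ≡ p ^ 2 * k [MOD p ^ (α + 2)]} =
      image (p * ·) {y ∈ range (p ^ α * p) | y ^ 2 ≡ k [MOD p ^ α]} := by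
    ext x
    have hmod : p ^ (α + 2) = p ^ 2 * p ^ α := by ring
    have hbound : p ^ (α + 2) = p * (p ^ α * p) := by ring
    have hcancel : ∀ y, (p * y) ^ 2 ≡ p ^ 2 * k [MOD p ^ (α + 2)] ↔ y ^ 2 ≡ k [MOD p ^ α] := by
      intro y
      rw [mul_pow, hmod]
      exact Nat.ModEq.mul_left_cancel_iff' (pow_ne_zero 2 hp.ne_zero)
    simp only [mem_filter, mem_range, mem_image]
    constructor
    · rintro ⟨hx, hroot⟩
      have hsq : p ^ 2 ∣ x ^ 2 := by
        rw [hmod] at hroot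
        exact (Nat.modEq_zero_iff_dvd.1 ((hroot.of_mul_right _).trans
          (Nat.modEq_zero_iff_dvd.2 (dvd_mul_right _ _))))
      obtain ⟨y, rfl⟩ := (Nat.pow_dvd_pow_iff two_ne_zero).1 hsq
      rw [hbound] at hx
      exact ⟨y, ⟨Nat.lt_of_mul_lt_mul_left hx, (hcancel y).1 hroot⟩, rfl⟩
    · rintro ⟨y, ⟨hy, hroot⟩, rfl⟩
      exact ⟨hbound ▸ Nat.mul_lt_mul_of_pos_left hy hp.pos, (hcancel y).2 hroot⟩
  have hperiodic : Function.Periodic (fun y ↦ y ^ 2 ≡ k [MOD p ^ α]) (p ^ α) := fun y ↦ by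
    have h : (y + p ^ α) ^ 2 ≡ y ^ 2 [MOD p ^ α] := Nat.ModEq.pow 2 (Nat.add_mod_right y _)
    exact propext ⟨h.symm.trans, h.trans⟩
  rw [rho_eq_card_modEq, rho_eq_card_modEq, hroots,
    card_image_of_injective _ (mul_right_injective₀ hp.ne_zero),
    card_filter_range_mul_of_periodic hperiodic]

lemma rho_sq_prime_pow_of_not_dvd {p m : ℕ} (hp : p.Prime) (hodd : Odd p) (hm : ¬ p ∣ m)
    {α : ℕ} (hα : α ≠ 0) : rho (m ^ 2) (p ^ α) = 2 := by
  have : NeZero (p ^ α) := ⟨pow_ne_zero α hp.ne_zero⟩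
  have hm' : ¬ (p : ℤ) ∣ m := by exact_mod_cast hm
  have hdvd_iff : ∀ b : ℤ, (b : ZMod (p ^ α)) = 0 ↔ (p : ℤ) ^ α ∣ b := fun b ↦ by
    rw [ZMod.intCast_zmod_eq_zero_iff_dvd, Nat.cast_pow]
  have hroots : ({x : ZMod (p ^ α) | x ^ 2 = ((m ^ 2 : ℕ) : ZMod (p ^ α))} : Finset _) =
      {((m : ℤ) : ZMod (p ^ α)), -((m : ℤ) : ZMod (p ^ α))} := by
    ext x
    obtain ⟨a, rfl⟩ := ZMod.intCast_surjective x
    simp only [mem_filter, mem_univ, true_and, mem_insert, mem_singleton]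
    rw [← sub_eq_zero, ← sub_eq_zero (a := (a : ZMod (p ^ α))),
      ← sub_eq_zero (a := (a : ZMod (p ^ α))), sub_neg_eq_add,
      show (a : ZMod (p ^ α)) ^ 2 - ((m ^ 2 : ℕ) : ZMod (p ^ α)) =
        (((a - m) * (a + m) : ℤ) : ZMod (p ^ α)) by push_cast; ring,
      ← Int.cast_sub, ← Int.cast_add, hdvd_iff, hdvd_iff, hdvd_iff]
    exact ⟨Int.pow_dvd_sub_or_add_of_pow_dvd_mul hp hodd hm',
      fun h ↦ h.elim (dvd_mul_of_dvd_left · _) (dvd_mul_of_dvd_right · _)⟩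
  have hne : ((m : ℤ) : ZMod (p ^ α)) ≠ -((m : ℤ) : ZMod (p ^ α)) := by
    intro h
    have h2m : ((2 * m : ℤ) : ZMod (p ^ α)) = 0 := by
      rw [Int.cast_mul, Int.cast_ofNat]
      linear_combination h
    rw [hdvd_iff] at h2m
    exact Int.not_dvd_two_mul_of_odd_prime hp hodd hm' ((dvd_pow_self _ hα).trans h2m)
  rw [rho_eq_card_zmod, hroots, card_pair hne]

lemma hasSum_rho_sq_of_not_dvd {p m : ℕ} (hp : p.Prime) (hodd : Odd p) (hm : ¬ p ∣ m) :
    HasSum (fun α : ℕ ↦ (rho (m ^ 2) (p ^ α) : ℝ) / p ^ α)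
      ((1 + (p : ℝ)⁻¹) / (1 - (p : ℝ)⁻¹)) := by
  have hp1 : (1 : ℝ) < p := by exact_mod_cast hp.one_lt
  have hq1 : (p : ℝ)⁻¹ < 1 := inv_lt_one_of_one_lt₀ hp1
  have hterm : ∀ α : ℕ, (rho (m ^ 2) (p ^ (α + 1)) : ℝ) / p ^ (α + 1) =
      2 * (p : ℝ)⁻¹ * (p : ℝ)⁻¹ ^ α := fun α ↦ by
    rw [rho_sq_prime_pow_of_not_dvd hp hodd hm α.succ_ne_zero, div_eq_mul_inv, ← inv_pow,
      pow_succ]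
    push_cast
    ring
  have hvalue : (1 + (p : ℝ)⁻¹) / (1 - (p : ℝ)⁻¹) -
      ∑ i ∈ range 1, (rho (m ^ 2) (p ^ i) : ℝ) / p ^ i = 2 * (p : ℝ)⁻¹ * (1 - (p : ℝ)⁻¹)⁻¹ := by
    have : (p : ℝ) - 1 ≠ 0 := by linarith
    simp only [sum_range_one, pow_zero, rho_one, Nat.cast_one, div_one]
    field_simp
    ring
  rw [← hasSum_nat_add_iff' 1, hvalue]
  simp only [hterm]
  exact (hasSum_geometric_of_lt_one (by positivity) hq1).mul_left _

lemma hasSum_rho_prime_sq_mul {p k : ℕ} (hp : p.Prime) {L : ℝ}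
    (h : HasSum (fun α : ℕ ↦ (rho k (p ^ α) : ℝ) / p ^ α) L) :
    HasSum (fun α : ℕ ↦ (rho (p ^ 2 * k) (p ^ α) : ℝ) / p ^ α)
      (1 + (p : ℝ)⁻¹ + (p : ℝ)⁻¹ * L) := by
  have hp0 : (p : ℝ) ≠ 0 := by exact_mod_cast hp.ne_zero
  have hterm : ∀ α : ℕ, (rho (p ^ 2 * k) (p ^ (α + 2)) : ℝ) / p ^ (α + 2) =
      (p : ℝ)⁻¹ * ((rho k (p ^ α) : ℝ) / p ^ α) := fun α ↦ by
    rw [rho_prime_sq_mul_pow_add_two hp]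
    push_cast
    field_simp
    ring
  have hvalue : 1 + (p : ℝ)⁻¹ + (p : ℝ)⁻¹ * L -
      ∑ i ∈ range 2, (rho (p ^ 2 * k) (p ^ i) : ℝ) / p ^ i = (p : ℝ)⁻¹ * L := by
    simp only [sum_range_succ, sum_range_zero, pow_zero, pow_one, rho_one,
      rho_prime_sq_mul_prime hp, Nat.cast_one, div_one, one_div]
    ring
  rw [← hasSum_nat_add_iff' 2, hvalue]
  simp only [hterm]
  exact h.mul_left _

lemma hasSum_rho_sq_pow_mul {p m : ℕ} (hp : p.Prime) (hodd : Odd p) (hm : ¬ p ∣ m) (v : ℕ) :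
    HasSum (fun α : ℕ ↦ (rho ((p ^ v * m) ^ 2) (p ^ α) : ℝ) / p ^ α)
      ((1 + (p : ℝ)⁻¹) / (1 - (p : ℝ)⁻¹)) := by
  induction v with
  | zero => simpa using hasSum_rho_sq_of_not_dvd hp hodd hm
  | succ v ih =>
    have hp1 : (1 : ℝ) < p := by exact_mod_cast hp.one_lt
    have : (p : ℝ) - 1 ≠ 0 := by linarith
    rw [show (p ^ (v + 1) * m) ^ 2 = p ^ 2 * (p ^ v * m) ^ 2 by ring]
    convert hasSum_rho_prime_sq_mul hp ih using 1
    field_simp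
    ring

theorem stmt_7_general (r : ℕ) (hr : 1 ≤ r) (p : ℕ) (hp : p.Prime) (hodd : Odd p) :
    (∑' α : ℕ, (rho (r ^ 2) (p ^ α) : ℝ) / p ^ α) =
      (1 + (p : ℝ)⁻¹) / (1 - (p : ℝ)⁻¹) := by
  obtain ⟨v, m, hm, rfl⟩ := Nat.exists_eq_pow_mul_and_not_dvd (by omega : r ≠ 0) p hp.ne_one
  exact (hasSum_rho_sq_pow_mul hp hodd hm v).tsum_eq

theorem stmt_7 (r : ℕ) (hr : 1 ≤ r) (p : ℕ) (hp : p.Prime) (hodd : Odd p)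
    (hpr : p ∣ r) (β β' : ℕ) (hβ : β = 2 * β')
    (hdvd : p ^ β ∣ r ^ 2) (hndvd : ¬ p ^ (β + 1) ∣ r ^ 2) :
    (∑' α : ℕ, (rho (r ^ 2) (p ^ α) : ℝ) / p ^ α) =
      (1 + (p : ℝ)⁻¹) / (1 - (p : ℝ)⁻¹) :=
  stmt_7_general r hr p hp hodd
end

section
/- Fix an integer r ≥ 1 and let p be a prime with p ∣ r and p ≥ 5, with p^β ∥ r². Then for every integer α ≥ 1, ρ_{r²}(p^α) ≤ p^{α/2}. -/
open Finset

theorem Prime.pow_sub_dvd_of_pow_dvd_mul {M : Type*} [CommMonoidWithZero M] [IsCancelMulZero M]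
    {p a b : M} (hp : Prime p) {k j : ℕ} (hb : ¬p ^ (j + 1) ∣ b) (h : p ^ k ∣ a * b) :
    p ^ (k - j) ∣ a := by
  induction j generalizing b k with
  | zero => simpa using hp.pow_dvd_of_dvd_mul_right k (by simpa using hb) h
  | succ j ih =>
    by_cases hpb : p ∣ b
    · obtain ⟨b, rfl⟩ := hpb
      have hb' : ¬p ^ (j + 1) ∣ b := fun h' => hb (by rw [pow_succ']; exact mul_dvd_mul_left p h')
      cases k with
      | zero => simp
      | succ k =>
        rw [pow_succ', mul_left_comm, mul_dvd_mul_iff_left hp.ne_zero] at h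
        simpa [Nat.add_sub_add_right] using ih hb' h
    · exact (pow_dvd_pow p (Nat.sub_le k _)).trans (hp.pow_dvd_of_dvd_mul_right k hpb h)

theorem Prime.pow_half_dvd_of_pow_dvd_sq {M : Type*} [CommMonoidWithZero M] [IsCancelMulZero M]
    {p a : M} (hp : Prime p) {k : ℕ} (h : p ^ k ∣ a ^ 2) : p ^ ((k + 1) / 2) ∣ a := by
  rcases hc : (k + 1) / 2 with _ | c
  · simp
  by_contra ha
  exact ha ((pow_dvd_pow p (by omega)).trans (hp.pow_sub_dvd_of_pow_dvd_mul ha (sq a ▸ h)))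

theorem Int.modEq_or_modEq_neg_of_sq_modEq_sq {p : ℕ} (hp : p.Prime) (hp2 : p ≠ 2) {a x : ℤ}
    {t k : ℕ} (ha : ¬(p : ℤ) ^ (t + 1) ∣ a) (h : x ^ 2 ≡ a ^ 2 [ZMOD (p : ℤ) ^ k]) :
    x ≡ a [ZMOD (p : ℤ) ^ (k - t)] ∨ x ≡ -a [ZMOD (p : ℤ) ^ (k - t)] := by
  have hpZ : Prime (p : ℤ) := Nat.prime_iff_prime_int.mp hp
  have hcop : IsCoprime ((p : ℤ) ^ (t + 1)) 2 :=
    (Nat.isCoprime_iff_coprime.mpr ((Nat.coprime_primes hp Nat.prime_two).mpr hp2)).pow_left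
  suffices (p : ℤ) ^ (k - t) ∣ x - a ∨ (p : ℤ) ^ (k - t) ∣ x - -a from
    this.imp (fun h => (Int.modEq_iff_dvd.mpr h).symm) (fun h => (Int.modEq_iff_dvd.mpr h).symm)
  rw [sub_neg_eq_add]
  have hdvd := h.symm.dvd
  rw [show x ^ 2 - a ^ 2 = (x - a) * (x + a) by ring] at hdvd
  by_cases hplus : (p : ℤ) ^ (t + 1) ∣ x + a
  · refine .inr (hpZ.pow_sub_dvd_of_pow_dvd_mul (fun hminus => ha ?_) (mul_comm (x - a) _ ▸ hdvd))
    exact hcop.dvd_of_dvd_mul_left (by simpa [two_mul] using dvd_sub hplus hminus)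
  · exact .inl (hpZ.pow_sub_dvd_of_pow_dvd_mul hplus hdvd)

theorem card_filter_range_intModEq_le {m N : ℕ} (hm : m ∣ N) (c : ℤ) :
    #{x ∈ range N | ((x : ℕ) : ℤ) ≡ c [ZMOD m]} ≤ N / m := by
  calc #{x ∈ range N | ((x : ℕ) : ℤ) ≡ c [ZMOD m]} ≤ #(range (N / m)) := by
        refine card_le_card_of_injOn (· / m) (fun x hx => ?_) (fun x hx y hy hxy => ?_)
        · simp only [mem_coe, mem_filter, mem_range] at hx ⊢
          exact Nat.div_lt_div_of_lt_of_dvd hm hx.1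
        · simp only [mem_coe, mem_filter, mem_range] at hx hy
          have hmod : x % m = y % m := Int.natCast_modEq_iff.mp (hx.2.trans hy.2.symm)
          rw [← Nat.div_add_mod x m, ← Nat.div_add_mod y m, show x / m = y / m from hxy, hmod]
    _ = N / m := card_range _

theorem rho_eq_card_filter_intModEq (k n : ℕ) :
    rho k n = #{x ∈ range n | ((x : ℕ) : ℤ) ^ 2 ≡ k [ZMOD n]} := by
  unfold rho
  congr 1
  refine filter_congr fun x _ => ?_
  rw [← Nat.cast_pow, Int.natCast_modEq_iff]
  rfl

theorem rho_le_of_pow_dvd {p k α : ℕ} (hp : p.Prime) (hk : p ^ α ∣ k) :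
    rho k (p ^ α) ≤ p ^ (α - (α + 1) / 2) := by
  have hpZ : Prime (p : ℤ) := Nat.prime_iff_prime_int.mp hp
  rw [rho_eq_card_filter_intModEq]
  calc #{x ∈ range (p ^ α) | ((x : ℕ) : ℤ) ^ 2 ≡ k [ZMOD (p ^ α : ℕ)]}
      ≤ #{x ∈ range (p ^ α) | ((x : ℕ) : ℤ) ≡ 0 [ZMOD (p ^ ((α + 1) / 2) : ℕ)]} := by
        refine card_le_card (monotone_filter_right _ fun x _ hx => ?_)
        have hk0 : (k : ℤ) ≡ 0 [ZMOD (p ^ α : ℕ)] :=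
          Int.modEq_zero_iff_dvd.mpr (by exact_mod_cast hk)
        have hx2 := Int.modEq_zero_iff_dvd.mp (hx.trans hk0)
        push_cast at hx2 ⊢
        exact Int.modEq_zero_iff_dvd.mpr (hpZ.pow_half_dvd_of_pow_dvd_sq hx2)
    _ ≤ p ^ α / p ^ ((α + 1) / 2) := card_filter_range_intModEq_le (pow_dvd_pow p (by omega)) 0
    _ = p ^ (α - (α + 1) / 2) := Nat.pow_div (by omega) hp.pos

theorem rho_sq_le_two_mul_pow {p r t α : ℕ} (hp : p.Prime) (hp2 : p ≠ 2)
    (hr : ¬p ^ (t + 1) ∣ r) : rho (r ^ 2) (p ^ α) ≤ 2 * p ^ t := by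
  have hrZ : ¬(p : ℤ) ^ (t + 1) ∣ r := by exact_mod_cast hr
  rw [rho_eq_card_filter_intModEq]
  calc #{x ∈ range (p ^ α) | ((x : ℕ) : ℤ) ^ 2 ≡ (r ^ 2 : ℕ) [ZMOD (p ^ α : ℕ)]}
      ≤ #({x ∈ range (p ^ α) | ((x : ℕ) : ℤ) ≡ r [ZMOD (p ^ (α - t) : ℕ)]} ∪
          {x ∈ range (p ^ α) | ((x : ℕ) : ℤ) ≡ -r [ZMOD (p ^ (α - t) : ℕ)]}) := by
        rw [← filter_or]
        refine card_le_card (monotone_filter_right _ fun x _ hx => ?_)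
        push_cast at hx ⊢
        exact Int.modEq_or_modEq_neg_of_sq_modEq_sq hp hp2 hrZ hx
    _ ≤ p ^ α / p ^ (α - t) + p ^ α / p ^ (α - t) := by
        have hdvd : p ^ (α - t) ∣ p ^ α := pow_dvd_pow p (Nat.sub_le α t)
        exact (card_union_le _ _).trans (add_le_add (card_filter_range_intModEq_le hdvd _)
          (card_filter_range_intModEq_le hdvd _))
    _ ≤ 2 * p ^ t := by
        rw [Nat.pow_div (by omega) hp.pos, ← two_mul]
        exact Nat.mul_le_mul_left 2 (Nat.pow_le_pow_right hp.pos (by omega))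

theorem sq_rho_sq_prime_pow_le {p : ℕ} (hp : p.Prime) (hp5 : 5 ≤ p) (r α : ℕ) :
    rho (r ^ 2) (p ^ α) ^ 2 ≤ p ^ α := by
  by_cases hdvd : p ^ α ∣ r ^ 2
  · calc rho (r ^ 2) (p ^ α) ^ 2 ≤ (p ^ (α - (α + 1) / 2)) ^ 2 :=
          Nat.pow_le_pow_left (rho_le_of_pow_dvd hp hdvd) 2
      _ = p ^ (2 * (α - (α + 1) / 2)) := by ring
      _ ≤ p ^ α := Nat.pow_le_pow_right hp.pos (by omega)
  · have hr : r ≠ 0 := by rintro rfl; simp at hdvd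
    set t := r.factorization p
    have h2t : 2 * t < α := by
      by_contra! hα
      refine hdvd ((pow_dvd_pow p hα).trans ?_)
      rw [mul_comm, pow_mul]
      exact pow_dvd_pow_of_dvd (Nat.ordProj_dvd r p) 2
    calc rho (r ^ 2) (p ^ α) ^ 2 ≤ (2 * p ^ t) ^ 2 :=
          Nat.pow_le_pow_left (rho_sq_le_two_mul_pow hp (by omega)
            (Nat.pow_succ_factorization_not_dvd hr hp)) 2
      _ = 4 * p ^ (2 * t) := by ring
      _ ≤ p * p ^ (2 * t) := by gcongr; omega
      _ = p ^ (2 * t + 1) := by ring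
      _ ≤ p ^ α := Nat.pow_le_pow_right hp.pos h2t

theorem stmt_9_general (r : ℕ) (p : ℕ) (hp : p.Prime) (hp5 : 5 ≤ p) (α : ℕ) :
    (rho (r ^ 2) (p ^ α) : ℝ) ≤ (p : ℝ) ^ ((α : ℝ) / 2) := by
  have hp0 : (0 : ℝ) ≤ p := Nat.cast_nonneg p
  rw [Real.rpow_div_two_eq_sqrt _ hp0, Real.rpow_natCast]
  refine (pow_le_pow_iff_left₀ (Nat.cast_nonneg _) (by positivity) two_ne_zero).mp ?_
  rw [← pow_mul, mul_comm, pow_mul, Real.sq_sqrt hp0]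
  exact_mod_cast sq_rho_sq_prime_pow_le hp hp5 r α

theorem stmt_9 (r : ℕ) (hr : 1 ≤ r) (p : ℕ) (hp : p.Prime) (hp5 : 5 ≤ p)
    (hpr : p ∣ r) (α : ℕ) (hα : 1 ≤ α) :
    (rho (r ^ 2) (p ^ α) : ℝ) ≤ (p : ℝ) ^ ((α : ℝ) / 2) :=
  stmt_9_general r p hp hp5 α
end

section
/- Let p ≥ 5 be a prime dividing r (r ≥ 1 an integer). Then for every complex s with Re(s) ≥ 1, the Euler factor A_p(s) = ∑_{α=0}^∞ ρ_{r²}(p^α)/p^{αs} is nonzero. -/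
open Finset

lemma pow_half_ceil_dvd_or_dvd_of_pow_dvd_mul {p : ℕ} (hp : p.Prime) {α : ℕ} {a b : ℤ}
    (h : (p : ℤ) ^ α ∣ a * b) : (p : ℤ) ^ ((α + 1) / 2) ∣ a ∨ (p : ℤ) ^ ((α + 1) / 2) ∣ b := by
  have : Fact p.Prime := ⟨hp⟩
  rcases eq_or_ne a 0 with rfl | ha
  · exact .inl (dvd_zero _)
  rcases eq_or_ne b 0 with rfl | hb
  · exact .inr (dvd_zero _)
  simp only [padicValInt_dvd_iff, ha, hb, mul_ne_zero ha hb, false_or,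
    padicValInt.mul ha hb] at h ⊢
  omega

lemma card_filter_range_dvd_sub_le {n m : ℕ} (hmn : m ∣ n) (c : ℤ) :
    #{x ∈ range n | (m : ℤ) ∣ ((x : ℕ) : ℤ) - c} ≤ n / m := by
  rcases Nat.eq_zero_or_pos m with rfl | hm
  · simp [zero_dvd_iff.mp hmn]
  have hc : ((c % m).toNat : ℤ) = c % m := Int.toNat_of_nonneg (Int.emod_nonneg _ (by omega))
  have hfilter : {x ∈ range n | (m : ℤ) ∣ ((x : ℕ) : ℤ) - c} =
      {x ∈ range n | x ≡ (c % m).toNat [MOD m]} := by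
    refine filter_congr fun x _ => ?_
    rw [← Int.natCast_modEq_iff, hc, Int.modEq_comm, ← Int.modEq_iff_dvd]
    exact ⟨(Int.mod_modEq c m).trans, (Int.mod_modEq c m).symm.trans⟩
  rw [hfilter, ← Nat.count_eq_card_filter_range, Nat.count_modEq_card _ hm,
    Nat.mod_eq_zero_of_dvd hmn]
  simp

lemma rho_sq_prime_pow_mul_le {p : ℕ} (hp : p.Prime) (r α : ℕ) :
    rho (r ^ 2) (p ^ α) * p ^ ((α + 1) / 2) ≤ 2 * p ^ α := by
  set N := p ^ ((α + 1) / 2)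
  have hN : N ∣ p ^ α := pow_dvd_pow p (by omega)
  have hsub : {x ∈ range (p ^ α) | x ^ 2 % p ^ α = r ^ 2 % p ^ α} ⊆
      {x ∈ range (p ^ α) | (N : ℤ) ∣ ((x : ℕ) : ℤ) - r} ∪
        {x ∈ range (p ^ α) | (N : ℤ) ∣ ((x : ℕ) : ℤ) - -(r : ℤ)} := by
    intro x
    simp only [mem_filter, mem_union]
    rintro ⟨hx, hsq⟩
    have hdvd : (p : ℤ) ^ α ∣ (x - r) * (x - -r) := by
      have := (Nat.modEq_iff_dvd.mp (Nat.ModEq.symm hsq))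
      push_cast at this
      convert this using 1
      ring
    push_cast [N]
    exact (pow_half_ceil_dvd_or_dvd_of_pow_dvd_mul hp hdvd).imp (⟨hx, ·⟩) (⟨hx, ·⟩)
  calc rho (r ^ 2) (p ^ α) * N ≤ (p ^ α / N + p ^ α / N) * N := by
        gcongr
        exact (card_le_card hsub).trans <| (card_union_le _ _).trans <|
          add_le_add (card_filter_range_dvd_sub_le hN _) (card_filter_range_dvd_sub_le hN _)
    _ = 2 * p ^ α := by rw [← two_mul, mul_assoc, Nat.div_mul_cancel hN]

lemma rho_sq_prime_eq_one_of_dvd {p r : ℕ} (hp : p.Prime) (hpr : p ∣ r) : rho (r ^ 2) p = 1 := by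
  have hr : r ^ 2 % p = 0 := Nat.mod_eq_zero_of_dvd (hpr.trans (dvd_pow_self r two_ne_zero))
  have hsol : {x ∈ range p | x ^ 2 % p = r ^ 2 % p} = {0} := by
    ext x
    simp only [mem_filter, mem_range, mem_singleton, hr]
    constructor
    · rintro ⟨hxp, hx⟩
      exact Nat.eq_zero_of_dvd_of_lt (hp.dvd_of_dvd_pow (Nat.dvd_of_mod_eq_zero hx)) hxp
    · rintro rfl
      simp [hp.pos]
  rw [rho, hsol, card_singleton]

lemma norm_natCast_div_natCast_cpow_le {n : ℕ} (hn : 0 < n) (a α : ℕ) {s : ℂ} (hs : 1 ≤ s.re) :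
    ‖(a : ℂ) / (n : ℂ) ^ ((α : ℂ) * s)‖ ≤ a / n ^ α := by
  have hn1 : (1 : ℝ) ≤ n := by exact_mod_cast hn
  have hre : ((α : ℂ) * s).re = α * s.re := by simp
  rw [norm_div, Complex.norm_natCast, Complex.norm_natCast_cpow_of_pos hn, hre]
  refine div_le_div_of_nonneg_left (Nat.cast_nonneg a) (by positivity) ?_
  rw [← Real.rpow_natCast]
  exact Real.rpow_le_rpow_of_exponent_le hn1 (le_mul_of_one_le_right (Nat.cast_nonneg α) hs)

lemma rho_sq_prime_pow_div_le {p : ℕ} (hp : p.Prime) (r α : ℕ) :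
    (rho (r ^ 2) (p ^ α) : ℝ) / p ^ α ≤ 2 * (√p)⁻¹ ^ α := by
  have hp0 : (0 : ℝ) < p := by exact_mod_cast hp.pos
  have hq : (√p)⁻¹ ^ 2 = (p : ℝ)⁻¹ := by rw [inv_pow, Real.sq_sqrt hp0.le]
  have hq1 : (√p)⁻¹ ≤ 1 :=
    inv_le_one_of_one_le₀ (Real.one_le_sqrt.mpr (by exact_mod_cast hp.one_le))
  calc (rho (r ^ 2) (p ^ α) : ℝ) / p ^ α ≤ 2 / p ^ ((α + 1) / 2) := by
        rw [div_le_div_iff₀ (by positivity) (by positivity)]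
        exact_mod_cast rho_sq_prime_pow_mul_le hp r α
    _ = 2 * (√p)⁻¹ ^ (2 * ((α + 1) / 2)) := by rw [pow_mul, hq, inv_pow, div_eq_mul_inv]
    _ ≤ 2 * (√p)⁻¹ ^ α := by
        gcongr 2 * ?_
        exact pow_le_pow_of_le_one (by positivity) hq1 (by omega)

lemma tsum_ne_zero_of_tsum_norm_succ_lt {E : Type*} [NormedAddCommGroup E] [CompleteSpace E]
    {f : ℕ → E} (hf : Summable (‖f ·‖)) (h : ∑' n, ‖f (n + 1)‖ < ‖f 0‖) : ∑' n, f n ≠ 0 := by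
  rw [hf.of_norm.tsum_eq_zero_add]
  intro h0
  have : ‖f 0‖ ≤ ∑' n, ‖f (n + 1)‖ := calc
    ‖f 0‖ = ‖∑' n, f (n + 1)‖ := by rw [eq_neg_of_add_eq_zero_left h0, norm_neg]
    _ ≤ ∑' n, ‖f (n + 1)‖ := norm_tsum_le_tsum_norm ((summable_nat_add_iff 1).mpr hf)
  linarith

lemma inv_add_tsum_two_mul_inv_sqrt_pow_lt_one {x : ℝ} (hx : 5 ≤ x) :
    x⁻¹ + ∑' n : ℕ, 2 * (√x)⁻¹ ^ (n + 2) < 1 := by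
  set q := (√x)⁻¹
  have hq0 : 0 ≤ q := by positivity
  have hq2 : q ^ 2 = x⁻¹ := by rw [inv_pow, Real.sq_sqrt (by linarith)]
  have hqhalf : q < 2⁻¹ := inv_strictAnti₀ two_pos (Real.lt_sqrt zero_le_two |>.mpr (by linarith))
  have hgeom : (1 - q)⁻¹ < 2 := (inv_lt_comm₀ (by linarith) two_pos).mpr (by linarith)
  calc x⁻¹ + ∑' n : ℕ, 2 * q ^ (n + 2) = x⁻¹ * (1 + 2 * (1 - q)⁻¹) := by
        simp_rw [pow_add, mul_comm _ (q ^ 2), ← mul_assoc]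
        rw [tsum_mul_left, tsum_geometric_of_lt_one hq0 (by linarith), hq2]
        ring
    _ < x⁻¹ * 5 := by gcongr; linarith
    _ ≤ 1 := by rw [inv_mul_le_iff₀ (by linarith)]; linarith

theorem stmt_10_general (r : ℕ) (p : ℕ) (hp : p.Prime) (hp5 : 5 ≤ p)
    (hpr : p ∣ r) (s : ℂ) (hs : 1 ≤ s.re) :
    (∑' α : ℕ, (rho (r ^ 2) (p ^ α) : ℂ) / (p : ℂ) ^ ((α : ℂ) * s)) ≠ 0 := by
  set f : ℕ → ℂ := fun α => (rho (r ^ 2) (p ^ α) : ℂ) / (p : ℂ) ^ ((α : ℂ) * s)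
  have hq1 : (√p)⁻¹ < 1 := inv_lt_one_of_one_lt₀ (Real.lt_sqrt zero_le_one |>.mpr
    (by exact_mod_cast (one_pow 2).trans_lt hp.one_lt))
  have hgeom : Summable fun α : ℕ => 2 * (√p)⁻¹ ^ α :=
    (summable_geometric_of_lt_one (by positivity) hq1).mul_left 2
  have hfq (α : ℕ) : ‖f α‖ ≤ 2 * (√p)⁻¹ ^ α :=
    (norm_natCast_div_natCast_cpow_le hp.pos _ α hs).trans (rho_sq_prime_pow_div_le hp r α)
  have hsum : Summable (‖f ·‖) := hgeom.of_nonneg_of_le (fun _ => norm_nonneg _) hfq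
  have hf0 : ‖f 0‖ = 1 := by simp [f, rho_one]
  have hf1 : ‖f 1‖ ≤ (p : ℝ)⁻¹ := calc
    ‖f 1‖ ≤ (rho (r ^ 2) (p ^ 1) : ℝ) / p ^ 1 := norm_natCast_div_natCast_cpow_le hp.pos _ 1 hs
    _ = (p : ℝ)⁻¹ := by simp [rho_sq_prime_eq_one_of_dvd hp hpr]
  refine tsum_ne_zero_of_tsum_norm_succ_lt hsum ?_
  calc ∑' n, ‖f (n + 1)‖ = ‖f 1‖ + ∑' n, ‖f (n + 2)‖ :=
        ((summable_nat_add_iff 1).mpr hsum).tsum_eq_zero_add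
    _ ≤ (p : ℝ)⁻¹ + ∑' n : ℕ, 2 * (√p)⁻¹ ^ (n + 2) :=
        add_le_add hf1 (((summable_nat_add_iff 2).mpr hsum).tsum_le_tsum (fun n => hfq (n + 2))
          ((summable_nat_add_iff 2).mpr hgeom))
    _ < 1 := inv_add_tsum_two_mul_inv_sqrt_pow_lt_one (by exact_mod_cast hp5)
    _ = ‖f 0‖ := hf0.symm

theorem stmt_10 (r : ℕ) (hr : 1 ≤ r) (p : ℕ) (hp : p.Prime) (hp5 : 5 ≤ p)
    (hpr : p ∣ r) (s : ℂ) (hs : 1 ≤ s.re) :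
    (∑' α : ℕ, (rho (r ^ 2) (p ^ α) : ℂ) / (p : ℂ) ^ ((α : ℂ) * s)) ≠ 0 :=
  stmt_10_general r p hp hp5 hpr s hs
end

section
/- Let Ω ≥ 1 be odd with σ_{−1}(Ω) ≤ 4/3. Define C₁(Ω) = ∑_{d ∣ Ω} (1/d)·(1 − ∑_{f ∣ 2Ω/d, f ≥ 2} 1/f). Then 0 < C₁(Ω) ≤ 1/2. -/
/-!
Write `S = σ₋₁(Ω)`. For odd `Ω` and `d ∣ Ω`, multiplicativity gives `σ₋₁(2Ω/d) = (3/2) σ₋₁(Ω/d)`,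
so `C₁(Ω) = 2S - (3/2) T` with `T = ∑_{d ∣ Ω} σ₋₁(Ω/d)/d`. Bounding `σ₋₁(Ω/d)` between `1` and `S`
gives `2S - 1 ≤ T ≤ S²`, hence `C₁(Ω) ≤ 3/2 - S ≤ 1/2` and `C₁(Ω) ≥ S (2 - (3/2) S) ≥ 0` when
`S ≤ 4/3`; the last bound is strict for `Ω > 1` because the term `d = Ω` of `T` is `1/Ω < S/Ω`.
-/

open Finset

noncomputable def sigmaInv (n : ℕ) : ℝ := ∑ d ∈ n.divisors, (1 : ℝ) / d

@[simp]
lemma sigmaInv_one : sigmaInv 1 = 1 := by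
  simp [sigmaInv]

lemma sigmaInv_eq_sum_div (n : ℕ) : sigmaInv n = (∑ d ∈ n.divisors, (d : ℝ)) / n := by
  rw [sigmaInv, ← Nat.sum_div_divisors, sum_div]
  refine sum_congr rfl fun d hd => ?_
  have hd0 : (d : ℝ) ≠ 0 := Nat.cast_ne_zero.mpr (Nat.pos_of_mem_divisors hd).ne'
  rw [Nat.cast_div (Nat.dvd_of_mem_divisors hd) hd0, one_div_div]

lemma sigmaInv_two_mul {m : ℕ} (hm : Odd m) : sigmaInv (2 * m) = 3 / 2 * sigmaInv m := by
  have hm0 : (m : ℝ) ≠ 0 := Nat.cast_ne_zero.mpr hm.pos.ne'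
  have hsum2 : ∑ d ∈ Nat.divisors 2, d = 3 := by decide
  rw [sigmaInv_eq_sum_div, sigmaInv_eq_sum_div, ← Nat.cast_sum, ← Nat.cast_sum,
    (Nat.coprime_two_left.mpr hm).sum_divisors_mul, hsum2]
  push_cast
  field_simp

lemma one_le_sigmaInv {n : ℕ} (hn : n ≠ 0) : 1 ≤ sigmaInv n := by
  simpa [sigmaInv] using single_le_sum (f := fun d : ℕ => (1 : ℝ) / d) (fun d _ => by positivity)
    (Nat.one_mem_divisors.mpr hn)

lemma one_lt_sigmaInv {n : ℕ} (hn : 1 < n) : 1 < sigmaInv n := by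
  simpa [sigmaInv] using single_lt_sum (f := fun d : ℕ => (1 : ℝ) / d) hn.ne'
    (Nat.one_mem_divisors.mpr (by omega)) (Nat.mem_divisors_self n (by omega))
    (by positivity) (fun d _ _ => by positivity)

lemma sigmaInv_le_of_dvd {m n : ℕ} (hn : n ≠ 0) (h : m ∣ n) : sigmaInv m ≤ sigmaInv n :=
  sum_le_sum_of_subset_of_nonneg (Nat.divisors_subset_of_dvd hn h) fun _ _ _ => by positivity

lemma sum_filter_two_le_inv {n : ℕ} (hn : n ≠ 0) :
    ∑ f ∈ n.divisors.filter (fun f => 2 ≤ f), (1 : ℝ) / f = sigmaInv n - 1 := by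
  have hfilter : n.divisors.filter (fun f => 2 ≤ f) = n.divisors.erase 1 := by
    ext f
    simp only [mem_filter, mem_erase, Nat.mem_divisors]
    constructor
    · rintro ⟨hf, h2⟩
      exact ⟨by omega, hf⟩
    · rintro ⟨h1, hf, -⟩
      exact ⟨⟨hf, hn⟩, by have := Nat.pos_of_dvd_of_pos hf (Nat.pos_of_ne_zero hn); omega⟩
  rw [hfilter, sum_erase_eq_sub (Nat.one_mem_divisors.mpr hn), sigmaInv, Nat.cast_one, div_one]

lemma two_mul_sigmaInv_sub_one_le {n : ℕ} (hn : n ≠ 0) :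
    2 * sigmaInv n - 1 ≤ ∑ d ∈ n.divisors, sigmaInv (n / d) / d := by
  have h1 : 1 ∈ n.divisors := Nat.one_mem_divisors.mpr hn
  have hrest : ∑ d ∈ n.divisors.erase 1, (1 : ℝ) / d
      ≤ ∑ d ∈ n.divisors.erase 1, sigmaInv (n / d) / d := by
    refine sum_le_sum fun d hd => div_le_div_of_nonneg_right ?_ (Nat.cast_nonneg d)
    exact one_le_sigmaInv (Nat.div_pos (Nat.divisor_le (mem_of_mem_erase hd))
      (Nat.pos_of_mem_divisors (mem_of_mem_erase hd))).ne'
  rw [sum_erase_eq_sub h1, sum_erase_eq_sub h1, ← sigmaInv] at hrest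
  simp only [Nat.cast_one, div_one, Nat.div_one] at hrest
  linarith

lemma sum_sigmaInv_div_lt_sq {n : ℕ} (hn : 1 < n) :
    ∑ d ∈ n.divisors, sigmaInv (n / d) / d < sigmaInv n ^ 2 := by
  have hn0 : n ≠ 0 := by omega
  rw [sq, sigmaInv, sum_mul, ← sigmaInv]
  refine sum_lt_sum (fun d hd => ?_) ⟨n, Nat.mem_divisors_self n hn0, ?_⟩
  · rw [div_eq_mul_one_div, mul_comm]
    exact mul_le_mul_of_nonneg_left
      (sigmaInv_le_of_dvd hn0 (Nat.div_dvd_of_dvd (Nat.dvd_of_mem_divisors hd))) (by positivity)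
  · rw [Nat.div_self hn0.bot_lt, sigmaInv_one]
    exact lt_mul_of_one_lt_right (by positivity) (one_lt_sigmaInv hn)

lemma sum_inv_mul_one_sub_sum_inv_eq {n : ℕ} (hodd : Odd n) :
    ∑ d ∈ n.divisors, (1 : ℝ) / d *
        (1 - ∑ f ∈ (2 * n / d).divisors.filter (fun f => 2 ≤ f), (1 : ℝ) / f)
      = 2 * sigmaInv n - 3 / 2 * ∑ d ∈ n.divisors, sigmaInv (n / d) / d := by
  rw [sigmaInv, mul_sum, mul_sum, ← sum_sub_distrib]
  refine sum_congr rfl fun d hd => ?_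
  have hdvd : d ∣ n := Nat.dvd_of_mem_divisors hd
  have hquot : Odd (n / d) := hodd.of_dvd_nat (Nat.div_dvd_of_dvd hdvd)
  rw [Nat.mul_div_assoc 2 hdvd, sum_filter_two_le_inv (mul_ne_zero two_ne_zero hquot.pos.ne'),
    sigmaInv_two_mul hquot]
  ring

theorem stmt_13_general (Ω : ℕ) (hodd : Odd Ω)
    (hσ : (∑ d ∈ Ω.divisors, (1 : ℝ) / d) ≤ 4 / 3) :
    0 < (∑ d ∈ Ω.divisors, (1 : ℝ) / d *
          (1 - ∑ f ∈ (2 * Ω / d).divisors.filter (fun f => 2 ≤ f), (1 : ℝ) / f)) ∧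
    (∑ d ∈ Ω.divisors, (1 : ℝ) / d *
          (1 - ∑ f ∈ (2 * Ω / d).divisors.filter (fun f => 2 ≤ f), (1 : ℝ) / f)) ≤ 1 / 2 := by
  have hΩ0 : Ω ≠ 0 := hodd.pos.ne'
  rw [sum_inv_mul_one_sub_sum_inv_eq hodd]
  change sigmaInv Ω ≤ 4 / 3 at hσ
  have hS := one_le_sigmaInv hΩ0
  refine ⟨?_, by linarith [two_mul_sigmaInv_sub_one_le hΩ0]⟩
  obtain rfl | hΩ1 := eq_or_ne Ω 1
  · norm_num
  · nlinarith [sum_sigmaInv_div_lt_sq (lt_of_le_of_ne hodd.pos hΩ1.symm)]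

theorem stmt_13 (Ω : ℕ) (hΩ : 1 ≤ Ω) (hodd : Odd Ω)
    (hσ : (∑ d ∈ Ω.divisors, (1 : ℝ) / d) ≤ 4 / 3) :
    0 < (∑ d ∈ Ω.divisors, (1 : ℝ) / d *
          (1 - ∑ f ∈ (2 * Ω / d).divisors.filter (fun f => 2 ≤ f), (1 : ℝ) / f)) ∧
    (∑ d ∈ Ω.divisors, (1 : ℝ) / d *
          (1 - ∑ f ∈ (2 * Ω / d).divisors.filter (fun f => 2 ≤ f), (1 : ℝ) / f)) ≤ 1 / 2 :=
  stmt_13_general Ω hodd hσ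
end
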